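/- arXiv:1809.08830 — 2 statements merged into one kernel-verified Lean document; each statement's English description precedes it below -/
import Mathlib

section
/- Let γ ∈ ℝ, let D ∈ ℝ^{d×d} be symmetric positive semidefinite with D ≠ 0, and let Σ ∈ ℝ^{d×d} be symmetric positive definite. If γ I_d − D is positive definite, then the supremum of ⟨D, S⟩ − γ·Tr(S − 2(Σ^{1/2} S Σ^{1/2})^{1/2}) over all symmetric positive semidefinite matrices S ∈ ℝ^{d×d} equals γ²·Tr((γ I_d − D)^{-1} Σ). -/
/-!
With `R = Σ^{1/2}`, `M = γ I − D` and `Q = (R S R)^{1/2}`, the objective is `2γ Tr Q − Tr(M S)`.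
Putting `X = R⁻¹ Q` and `Y = γ R` turns this into `2 Tr(Xᵀ Y) − Tr(Xᵀ M X)`, which the matrix
Young inequality `2 Tr(Xᵀ Y) ≤ Tr(Xᵀ M X) + Tr(Yᵀ M⁻¹ Y)` (complete the square around `M⁻¹ Y`)
bounds by `γ² Tr(M⁻¹ Σ)`. Equality at `X = M⁻¹ Y` means `S = γ² M⁻¹ Σ M⁻¹`.
-/

open Matrix

-- `msqrt M` is the unique symmetric PSD square root of a symmetric PSD matrix `M` (else `0`).
open Classical in
noncomputable def msqrt {ι : Type*} [Fintype ι] [DecidableEq ι] (M : Matrix ι ι ℝ) : Matrix ι ι ℝ :=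
  if h : M.PosSemidef then
    (h.1.eigenvectorUnitary : Matrix ι ι ℝ) * diagonal ((RCLike.ofReal : ℝ → ℝ) ∘ Real.sqrt ∘ h.1.eigenvalues) *
      (star h.1.eigenvectorUnitary : Matrix ι ι ℝ) else 0

/-- The objective `S ↦ ⟨D, S⟩ − γ·Tr(S − 2(Σ^{1/2} S Σ^{1/2})^{1/2})`. -/
noncomputable def obj {d : ℕ} (γ : ℝ) (D Sg S : Matrix (Fin d) (Fin d) ℝ) : ℝ :=
  (Dᵀ * S).trace - γ * (S - (2:ℝ) • msqrt (msqrt Sg * S * msqrt Sg)).trace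

namespace Matrix

lemma PosDef.pos_of_smul_one_sub {n : Type*} [DecidableEq n] [Nonempty n] {γ : ℝ}
    {D : Matrix n n ℝ} (hγ : (γ • 1 - D).PosDef) (hD : D.PosSemidef) : 0 < γ := by
  obtain ⟨i⟩ := ‹Nonempty n›
  have hdiag := hγ.diag_pos (i := i)
  simp only [sub_apply, smul_apply, one_apply_eq, smul_eq_mul, mul_one] at hdiag
  linarith [hD.diag_nonneg (i := i)]

variable {n m : Type*} [Fintype n] [DecidableEq n] [Fintype m]

section msqrt

open scoped MatrixOrder

variable {M A : Matrix n n ℝ}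

lemma msqrt_eq_cfcSqrt (hM : M.PosSemidef) : msqrt M = CFC.sqrt M := by
  rw [CFC.sqrt_eq_cfc, cfc_nnreal_eq_real _ M hM.nonneg, hM.1.cfc_eq, IsHermitian.cfc,
    Unitary.conjStarAlgAut_apply, msqrt, dif_pos hM]
  congr 3
  funext i
  simp [Real.coe_sqrt, Real.coe_toNNReal', max_eq_left (hM.eigenvalues_nonneg i)]

lemma PosSemidef.msqrt (hM : M.PosSemidef) : (msqrt M).PosSemidef := by
  rw [msqrt_eq_cfcSqrt hM]
  exact (CFC.sqrt_nonneg M).posSemidef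

lemma msqrt_mul_self (hM : M.PosSemidef) : msqrt M * msqrt M = M := by
  rw [msqrt_eq_cfcSqrt hM]
  exact CFC.sqrt_mul_sqrt_self M hM.nonneg

lemma msqrt_sq (hA : A.PosSemidef) : msqrt (A ^ 2) = A := by
  rw [msqrt_eq_cfcSqrt (hA.pow 2)]
  exact CFC.sqrt_sq A hA.nonneg

lemma PosDef.msqrt (hM : M.PosDef) : (msqrt M).PosDef :=
  hM.posSemidef.msqrt.posDef_iff_isUnit.mpr <|
    isUnit_of_mul_isUnit_left ((msqrt_mul_self hM.posSemidef).symm ▸ hM.isUnit)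

end msqrt

lemma PosDef.two_mul_trace_transpose_mul_le {M : Matrix n n ℝ} (hM : M.PosDef)
    (X Y : Matrix n m ℝ) :
    2 * (Xᵀ * Y).trace ≤ (Xᵀ * M * X).trace + (Yᵀ * M⁻¹ * Y).trace := by
  have hsq := (hM.posSemidef.conjTranspose_mul_mul_same (X - M⁻¹ * Y)).trace_nonneg
  have hMi : M⁻¹ᵀ = M⁻¹ := by
    rw [transpose_nonsing_inv, ← conjTranspose_eq_transpose_of_trivial, hM.isHermitian.eq]
  have hYX : (Yᵀ * X).trace = (Xᵀ * Y).trace := by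
    rw [← trace_transpose, transpose_mul, transpose_transpose]
  rw [conjTranspose_eq_transpose_of_trivial, transpose_sub, transpose_mul, hMi] at hsq
  have hdet := (isUnit_iff_isUnit_det M).mp hM.isUnit
  simp only [Matrix.sub_mul, Matrix.mul_sub, trace_sub, Matrix.mul_assoc,
    mul_nonsing_inv_cancel_left _ _ hdet, nonsing_inv_mul_cancel_left _ _ hdet] at hsq
  simp only [Matrix.mul_assoc]
  linarith

variable {M Sg S : Matrix n n ℝ}

lemma two_mul_trace_msqrt_conj_sub_le (hM : M.PosDef) (hSg : Sg.PosDef) (hS : S.PosSemidef)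
    (γ : ℝ) :
    2 * γ * (msqrt (msqrt Sg * S * msqrt Sg)).trace - (M * S).trace ≤
      γ ^ 2 * (M⁻¹ * Sg).trace := by
  set R := msqrt Sg
  have hR : R.PosDef := hSg.msqrt
  have hRR : R * R = Sg := msqrt_mul_self hSg.posSemidef
  have hRdet := (isUnit_iff_isUnit_det R).mp hR.isUnit
  have hRT : Rᵀ = R := by rw [← conjTranspose_eq_transpose_of_trivial, hR.isHermitian.eq]
  set Q := msqrt (R * S * R)
  have hRSR : (R * S * R).PosSemidef := by
    simpa only [hR.isHermitian.eq] using hS.mul_mul_conjTranspose_same R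
  have hQT : Qᵀ = Q := by
    rw [← conjTranspose_eq_transpose_of_trivial, hRSR.msqrt.isHermitian.eq]
  have hQQ : Q * Q = R * S * R := msqrt_mul_self hRSR
  have hcross : ((R⁻¹ * Q)ᵀ * (γ • R)).trace = γ * Q.trace := by
    rw [transpose_mul, hQT, transpose_nonsing_inv, hRT, mul_smul_comm, Matrix.mul_assoc,
      nonsing_inv_mul _ hRdet, Matrix.mul_one, trace_smul, smul_eq_mul]
  have hquad : ((R⁻¹ * Q)ᵀ * M * (R⁻¹ * Q)).trace = (M * S).trace := by
    rw [transpose_mul, hQT, transpose_nonsing_inv, hRT, Matrix.mul_assoc, trace_mul_comm,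
      Matrix.mul_assoc, Matrix.mul_assoc, ← Matrix.mul_assoc Q, hQQ]
    simp only [Matrix.mul_assoc, nonsing_inv_mul_cancel_left _ _ hRdet,
      mul_nonsing_inv _ hRdet, Matrix.mul_one]
  have hdual : ((γ • R)ᵀ * M⁻¹ * (γ • R)).trace = γ ^ 2 * (M⁻¹ * Sg).trace := by
    rw [transpose_smul, hRT, smul_mul_assoc, mul_smul_comm, smul_mul_assoc, smul_smul, trace_smul,
      smul_eq_mul, trace_mul_comm, ← Matrix.mul_assoc, hRR, trace_mul_comm Sg, sq]
  have key := hM.two_mul_trace_transpose_mul_le (R⁻¹ * Q) (γ • R)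
  rw [hcross, hquad, hdual] at key
  linarith

lemma two_mul_trace_msqrt_conj_sub_eq (hM : M.PosDef) (hSg : Sg.PosSemidef) {γ : ℝ}
    (hγ : 0 ≤ γ) :
    2 * γ * (msqrt (msqrt Sg * (γ ^ 2 • (M⁻¹ * Sg * M⁻¹)) * msqrt Sg)).trace -
      (M * (γ ^ 2 • (M⁻¹ * Sg * M⁻¹))).trace = γ ^ 2 * (M⁻¹ * Sg).trace := by
  set R := msqrt Sg
  have hRR : R * R = Sg := msqrt_mul_self hSg
  have hR : R.IsHermitian := hSg.msqrt.isHermitian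
  have hMdet := (isUnit_iff_isUnit_det M).mp hM.isUnit
  have hsq : R * (γ ^ 2 • (M⁻¹ * Sg * M⁻¹)) * R = (γ • (R * M⁻¹ * R)) ^ 2 := by
    rw [← hRR, smul_pow, sq (R * M⁻¹ * R)]
    simp only [mul_smul_comm, smul_mul_assoc, Matrix.mul_assoc]
  have hRMR : (R * M⁻¹ * R).PosSemidef := by
    simpa only [hR.eq] using hM.inv.posSemidef.mul_mul_conjTranspose_same R
  have hroot : (γ • (R * M⁻¹ * R)).trace = γ * (M⁻¹ * Sg).trace := by
    rw [trace_smul, smul_eq_mul, Matrix.mul_assoc, trace_mul_comm, Matrix.mul_assoc, hRR]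
  have hlin : (M * (γ ^ 2 • (M⁻¹ * Sg * M⁻¹))).trace = γ ^ 2 * (M⁻¹ * Sg).trace := by
    rw [mul_smul_comm, trace_smul, smul_eq_mul, Matrix.mul_assoc,
      mul_nonsing_inv_cancel_left _ _ hMdet, trace_mul_comm]
  rw [hsq, msqrt_sq (hRMR.smul hγ), hroot, hlin]
  ring

end Matrix

lemma obj_eq_two_mul_trace_msqrt_sub {d : ℕ} (γ : ℝ) (D Sg : Matrix (Fin d) (Fin d) ℝ)
    {S : Matrix (Fin d) (Fin d) ℝ} (hS : S.IsHermitian) :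
    obj γ D Sg S =
      2 * γ * (msqrt (msqrt Sg * S * msqrt Sg)).trace - ((γ • 1 - D) * S).trace := by
  have hST : Sᵀ = S := by rw [← conjTranspose_eq_transpose_of_trivial, hS.eq]
  rw [obj, ← hST, trace_transpose_mul, hST, sub_mul, smul_mul_assoc, Matrix.one_mul, trace_sub,
    trace_sub, trace_smul, trace_smul, smul_eq_mul, smul_eq_mul]
  ring

/-- If `γ I − D ≻ 0`, the supremum of `⟨D,S⟩ − γ·Tr(S − 2(Σ^{1/2} S Σ^{1/2})^{1/2})`
over all symmetric positive semidefinite `S` equals `γ²·Tr((γ I − D)⁻¹ Σ)`. -/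
theorem stmt0 {d : ℕ} (γ : ℝ) (D Sg : Matrix (Fin d) (Fin d) ℝ)
    (hD : D.PosSemidef) (hD0 : D ≠ 0) (hSg : Sg.PosDef)
    (hγ : (γ • (1 : Matrix (Fin d) (Fin d) ℝ) - D).PosDef) :
    IsLUB { r : ℝ | ∃ S : Matrix (Fin d) (Fin d) ℝ, S.PosSemidef ∧ r = obj γ D Sg S }
      (γ ^ 2 * ((γ • (1 : Matrix (Fin d) (Fin d) ℝ) - D)⁻¹ * Sg).trace) := by
  have : Nonempty (Fin d) := by
    by_contra hempty
    rw [not_nonempty_iff] at hempty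
    exact hD0 (Subsingleton.elim _ _)
  have hγ0 : 0 < γ := hγ.pos_of_smul_one_sub hD
  set M := γ • (1 : Matrix (Fin d) (Fin d) ℝ) - D
  have hS : (γ ^ 2 • (M⁻¹ * Sg * M⁻¹)).PosSemidef := by
    refine PosSemidef.smul ?_ (sq_nonneg γ)
    simpa only [hγ.inv.isHermitian.eq] using hSg.posSemidef.mul_mul_conjTranspose_same M⁻¹
  refine ⟨?_, fun v hv => hv ⟨_, hS, ?_⟩⟩
  · rintro _ ⟨S, hS, rfl⟩
    rw [obj_eq_two_mul_trace_msqrt_sub γ D Sg hS.isHermitian]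
    exact two_mul_trace_msqrt_conj_sub_le hγ hSg hS γ
  · rw [obj_eq_two_mul_trace_msqrt_sub γ D Sg hS.isHermitian,
      two_mul_trace_msqrt_conj_sub_eq hγ hSg.posSemidef hγ0.le]
end

section
/- Let 0 < σ̲ ≤ σ̄ and let S ∈ ℝ^{d×d} be a symmetric matrix, partitioned into blocks, satisfying σ̲ I_d ⪯ S ⪯ σ̄ I_d. Then S_xy S_yy^{-1} S_yx ⪯ (σ̄ − σ̲) I_n. -/
/-!
The spectral bounds restrict to the diagonal blocks: `S_xx ⪯ σ̄ I`, and `S_yy ⪰ σ̲ I` is invertible.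
Lowering only the `xx` block of `S` by `σ̲` keeps it above `S - σ̲ I ⪰ 0` and leaves `S_xy`,
`S_yy` unchanged, so its Schur complement gives `S_xy S_yy⁻¹ S_yx ⪯ S_xx - σ̲ I ⪯ (σ̄ - σ̲) I`.
-/

open Matrix

/-- The objective `f(S) = Tr(S_xx − S_xy S_yy⁻¹ S_yx)` of the convex reformulation. -/
noncomputable def fobj {n m : ℕ} (S : Matrix (Fin n ⊕ Fin m) (Fin n ⊕ Fin m) ℝ) : ℝ :=
  (S.toBlocks₁₁ - S.toBlocks₁₂ * S.toBlocks₂₂⁻¹ * S.toBlocks₂₁).trace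

/-- The gradient matrix `D(G) = [I, −G]ᵀ[I, −G] = [[I, −G], [−Gᵀ, GᵀG]]`. -/
def Dmat {n m : ℕ} (G : Matrix (Fin n) (Fin m) ℝ) :
    Matrix (Fin n ⊕ Fin m) (Fin n ⊕ Fin m) ℝ :=
  Matrix.fromBlocks 1 (-G) (-Gᵀ) (Gᵀ * G)

open scoped ComplexOrder

namespace Matrix

theorem IsHermitian.toBlocks₂₁_eq {α n m : Type*} [InvolutiveStar α]
    {S : Matrix (n ⊕ m) (n ⊕ m) α} (hS : S.IsHermitian) : S.toBlocks₂₁ = S.toBlocks₁₂ᴴ := by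
  rw [← fromBlocks_toBlocks S, isHermitian_fromBlocks_iff] at hS
  exact hS.2.1.symm

variable {𝕜 n m : Type*} [RCLike 𝕜]

theorem PosSemidef.toBlocks₁₁ {S : Matrix (n ⊕ m) (n ⊕ m) 𝕜} (hS : S.PosSemidef) :
    S.toBlocks₁₁.PosSemidef :=
  hS.submatrix Sum.inl

theorem PosDef.toBlocks₂₂ {S : Matrix (n ⊕ m) (n ⊕ m) 𝕜} (hS : S.PosDef) :
    S.toBlocks₂₂.PosDef :=
  hS.submatrix Sum.inr_injective

theorem PosSemidef.schur_toBlocks₂₂ [Finite n] [Fintype m] [DecidableEq m]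
    {S : Matrix (n ⊕ m) (n ⊕ m) 𝕜} (hS : S.PosSemidef) (hD : S.toBlocks₂₂.PosDef) :
    (S.toBlocks₁₁ - S.toBlocks₁₂ * S.toBlocks₂₂⁻¹ * S.toBlocks₂₁).PosSemidef := by
  have := hD.isUnit.invertible
  have h₂₁ := hS.isHermitian.toBlocks₂₁_eq
  rw [← fromBlocks_toBlocks S, h₂₁] at hS
  rw [h₂₁]
  exact (PosDef.fromBlocks₂₂ _ _ hD).1 hS

theorem posDef_of_posSemidef_sub_smul_one {k : Type*} [Fintype k] [DecidableEq k]
    {S : Matrix k k 𝕜} {c : ℝ} (hc : 0 < c) (hS : (S - c • 1).PosSemidef) : S.PosDef := by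
  simpa using PosDef.posSemidef_add hS (PosDef.one.smul hc)

variable [Fintype n] [Fintype m] [DecidableEq n] [DecidableEq m]

theorem posSemidef_toBlocks₁₁_sub_smul_one_sub_schur {S : Matrix (n ⊕ m) (n ⊕ m) 𝕜} {c : ℝ}
    (hc : 0 < c) (hS : (S - c • 1).PosSemidef) :
    (S.toBlocks₁₁ - c • 1 - S.toBlocks₁₂ * S.toBlocks₂₂⁻¹ * S.toBlocks₂₁).PosSemidef := by
  set T := S - c • diagonal (Sum.elim 1 0)
  have hT : T.PosSemidef := by
    have hsplit : T = (S - c • 1) + c • diagonal (Sum.elim 0 1) := by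
      ext (i | i) (j | j) <;> simp [T, one_apply, diagonal_apply]
    rw [hsplit]
    refine hS.add (PosSemidef.smul (PosSemidef.diagonal fun i => ?_) hc.le)
    cases i <;> simp
  have hT₂₂ : T.toBlocks₂₂ = S.toBlocks₂₂ := by ext; simp [T, toBlocks₂₂, diagonal_apply]
  have hD : T.toBlocks₂₂.PosDef := hT₂₂ ▸ (posDef_of_posSemidef_sub_smul_one hc hS).toBlocks₂₂
  convert hT.schur_toBlocks₂₂ hD using 2 <;> ext <;>
    simp [T, toBlocks₁₁, toBlocks₁₂, toBlocks₂₁, toBlocks₂₂, one_apply, diagonal_apply]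

end Matrix

theorem stmt14_general {n m : ℕ} (σl σu : ℝ) (hσl : 0 < σl)
    (S : Matrix (Fin n ⊕ Fin m) (Fin n ⊕ Fin m) ℝ)
    (hlo : (S - σl • (1 : Matrix (Fin n ⊕ Fin m) (Fin n ⊕ Fin m) ℝ)).PosSemidef)
    (hhi : (σu • (1 : Matrix (Fin n ⊕ Fin m) (Fin n ⊕ Fin m) ℝ) - S).PosSemidef) :
    ((σu - σl) • (1 : Matrix (Fin n) (Fin n) ℝ) -
      S.toBlocks₁₂ * S.toBlocks₂₂⁻¹ * S.toBlocks₂₁).PosSemidef := by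
  have hxx : (σu • 1 - S.toBlocks₁₁).PosSemidef := by
    have hblock : (σu • 1 - S).toBlocks₁₁ = σu • 1 - S.toBlocks₁₁ := by
      ext; simp [toBlocks₁₁, one_apply]
    exact hblock ▸ hhi.toBlocks₁₁
  have hsplit : (σu - σl) • (1 : Matrix (Fin n) (Fin n) ℝ) -
      S.toBlocks₁₂ * S.toBlocks₂₂⁻¹ * S.toBlocks₂₁ = (σu • 1 - S.toBlocks₁₁) +
        (S.toBlocks₁₁ - σl • 1 - S.toBlocks₁₂ * S.toBlocks₂₂⁻¹ * S.toBlocks₂₁) := by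
    rw [sub_smul]
    abel
  rw [hsplit]
  exact hxx.add (posSemidef_toBlocks₁₁_sub_smul_one_sub_schur hσl hlo)

/-- If `σ̲ I ⪯ S ⪯ σ̄ I` with `0 < σ̲ ≤ σ̄`, then `S_xy S_yy⁻¹ S_yx ⪯ (σ̄ − σ̲) I_n`. -/
theorem stmt14 {n m : ℕ} [NeZero n] [NeZero m] (σl σu : ℝ) (hσl : 0 < σl) (hσ : σl ≤ σu)
    (S : Matrix (Fin n ⊕ Fin m) (Fin n ⊕ Fin m) ℝ) (hsym : S.IsSymm)
    (hlo : (S - σl • (1 : Matrix (Fin n ⊕ Fin m) (Fin n ⊕ Fin m) ℝ)).PosSemidef)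
    (hhi : (σu • (1 : Matrix (Fin n ⊕ Fin m) (Fin n ⊕ Fin m) ℝ) - S).PosSemidef) :
    ((σu - σl) • (1 : Matrix (Fin n) (Fin n) ℝ) -
      S.toBlocks₁₂ * S.toBlocks₂₂⁻¹ * S.toBlocks₂₁).PosSemidef :=
  stmt14_general σl σu hσl S hlo hhi
end
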